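/- arXiv:1802.06723 — 2 statements merged into one kernel-verified Lean document; each statement's English description precedes it below -/
import Mathlib

section
/- Let λ, μ₁, μ₂ ∈ (0,1) with λ < μ₁ + μ₂, and consider the Markov chain on ℤ₊ with transitions: from state q ≥ 2, Q' = q − X₁ − X₂ + A; from state q = 1, Q' = 1 − X₁ + A; from state q = 0, Q' = A, where X₁ ~ Bernoulli(μ₁), X₂ ~ Bernoulli(μ₂), A ~ Bernoulli(λ) are independent. Then for all sufficiently small δ > 0 there exist positive constants κ₀ and κ₁ (depending only on δ, λ, μ₁, μ₂) such that, with V(q) = e^{δq}, E[V(Q(t+1)) | Q(t) = q] − V(q) ≤ κ₀·1{q ∈ {0,1}} − κ₁·V(q) for every q ∈ ℤ₊. -/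
/-- Probability weight of a Bernoulli(p) outcome. -/
noncomputable def bern (p : ℝ) (x : Bool) : ℝ := if x then p else 1 - p

/-- Numerical value of a Bernoulli indicator. -/
def b2n (x : Bool) : ℕ := if x then 1 else 0

/-- One-step transition of the single-queue two-server chain: from `q ≥ 2` both
servers serve (`Q' = q − X₁ − X₂ + A`), from `q = 1` only the priority server
serves (`Q' = 1 − X₁ + A`), and from `q = 0` only arrivals occur (`Q' = A`). -/
def nextQ (q : ℕ) (x1 x2 a : Bool) : ℕ :=
  if 2 ≤ q then q - b2n x1 - b2n x2 + b2n a
  else if q = 1 then 1 - b2n x1 + b2n a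
  else b2n a

set_option maxHeartbeats 1000000 in
/-- The key algebraic drift inequality for the moment generating function. -/
theorem key_mgf_ineq (lam mu1 mu2 δ E : ℝ)
    (hl0 : 0 < lam) (hl1 : lam < 1) (hm10 : 0 < mu1) (hm11 : mu1 < 1)
    (hm20 : 0 < mu2) (hm21 : mu2 < 1) (hstab : lam < mu1 + mu2)
    (hδ : 0 < δ) (hδ1 : δ ≤ (mu1+mu2-lam)/16) (hδ2 : δ ≤ 1/2)
    (hE1 : 1 + δ ≤ E) (hE2 : E ≤ 1 + 2*δ) :
    (1 - lam + lam*E) * ((1-mu1)*E + mu1) * ((1-mu2)*E + mu2)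
      ≤ (1 - δ*(mu1+mu2-lam)/16) * E^2 := by
  have hMl : 0 < mu1 + mu2 - lam := by linarith
  have hE0 : (1:ℝ) ≤ E := by linarith
  have ha0 : (0:ℝ) ≤ E - 1 := by linarith
  have ha2 : E - 1 ≤ 2*δ := by linarith
  have hX : lam*E - (mu1+mu2) ≤ -(7/8)*(mu1+mu2-lam) := by nlinarith
  have hXneg : lam*E - (mu1+mu2) ≤ 0 := by nlinarith
  have hae : δ ≤ (E-1)*E := by nlinarith
  have t1 : (E-1)*E*(lam*E-(mu1+mu2)) ≤ δ*(-(7/8)*(mu1+mu2-lam)) := by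
    calc (E-1)*E*(lam*E-(mu1+mu2)) ≤ δ*(lam*E-(mu1+mu2)) :=
          mul_le_mul_of_nonpos_right hae hXneg
      _ ≤ δ*(-(7/8)*(mu1+mu2-lam)) := mul_le_mul_of_nonneg_left hX hδ.le
  have hp : mu1*mu2 ≤ 1 := by nlinarith
  have h1 : mu1*mu2*(E-1)^2 ≤ 4*δ^2 := by
    nlinarith [mul_nonneg (sub_nonneg.mpr hp) (sq_nonneg (E-1)), sq_nonneg (E-1)]
  have hc0 : (0:ℝ) ≤ 1 + lam*(E-1) := by nlinarith
  have hc : 1 + lam*(E-1) ≤ 2 := by nlinarith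
  have t2 : mu1*mu2*(E-1)^2*(1+lam*(E-1)) ≤ 4*δ^2*2 :=
    mul_le_mul h1 hc hc0 (by positivity)
  have t3 : 0 ≤ lam*(mu1+mu2)*(E-1)^2*E := by positivity
  have hE4 : E^2 ≤ 4 := by nlinarith
  have t4 : δ*(mu1+mu2-lam)/16 * E^2 ≤ δ*(mu1+mu2-lam)/16 * 4 :=
    mul_le_mul_of_nonneg_left hE4 (by positivity)
  have t5 : 4*δ^2*2 ≤ δ*(mu1+mu2-lam)/2 := by
    have h := mul_le_mul_of_nonneg_left hδ1 hδ.le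
    linarith [h]
  have hid : (1 - lam + lam*E) * ((1-mu1)*E + mu1) * ((1-mu2)*E + mu2)
      = E^2 + (E-1)*E*(lam*E-(mu1+mu2))
        + mu1*mu2*(E-1)^2*(1+lam*(E-1))
        - lam*(mu1+mu2)*(E-1)^2*E := by ring
  have hdM : 0 ≤ δ*(mu1+mu2-lam) := le_of_lt (mul_pos hδ hMl)
  rw [hid]
  linarith [t1, t2, t3, t4, t5, hdM]

lemma nextQ_le_two (q : ℕ) (hq : q ≤ 1) (x1 x2 a : Bool) : nextQ q x1 x2 a ≤ 2 := by
  interval_cases q <;> cases x1 <;> cases x2 <;> cases a <;> simp [nextQ, b2n]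

lemma bern_nonneg {p : ℝ} (h0 : 0 < p) (h1 : p < 1) (x : Bool) : 0 ≤ bern p x := by
  cases x <;> simp [bern] <;> linarith

lemma bern_le_one {p : ℝ} (h0 : 0 < p) (h1 : p < 1) (x : Bool) : bern p x ≤ 1 := by
  cases x <;> simp [bern] <;> linarith

/-- For `λ, μ₁, μ₂ ∈ (0,1)` with `λ < μ₁ + μ₂`, for all sufficiently
small `δ > 0` there are constants `κ₀, κ₁ > 0` such that, with `V(q) = e^{δq}`,
`E[V(Q(t+1)) | Q(t) = q] − V(q) ≤ κ₀·1{q ∈ {0,1}} − κ₁·V(q)` for every `q ∈ ℤ₊`;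
the conditional expectation is written as the explicit sum over the independent
Bernoulli indicators `X₁ ~ Ber(μ₁)`, `X₂ ~ Ber(μ₂)`, `A ~ Ber(λ)`. -/
theorem exp_lyapunov_drift_single_queue_two_servers
    (lam mu1 mu2 : ℝ)
    (hlam : lam ∈ Set.Ioo (0:ℝ) 1) (hmu1 : mu1 ∈ Set.Ioo (0:ℝ) 1)
    (hmu2 : mu2 ∈ Set.Ioo (0:ℝ) 1) (hstab : lam < mu1 + mu2) :
    ∃ δ0 : ℝ, 0 < δ0 ∧ ∀ δ : ℝ, 0 < δ → δ ≤ δ0 →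
      ∃ κ0 κ1 : ℝ, 0 < κ0 ∧ 0 < κ1 ∧
        ∀ q : ℕ,
          (∑ x1 : Bool, ∑ x2 : Bool, ∑ a : Bool,
              bern mu1 x1 * bern mu2 x2 * bern lam a *
                Real.exp (δ * (nextQ q x1 x2 a : ℝ)))
              - Real.exp (δ * (q : ℝ))
            ≤ κ0 * (if q = 0 ∨ q = 1 then (1:ℝ) else 0) - κ1 * Real.exp (δ * (q : ℝ)) := by
  obtain ⟨hl0, hl1⟩ := hlam
  obtain ⟨hm10, hm11⟩ := hmu1
  obtain ⟨hm20, hm21⟩ := hmu2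
  have hMl : 0 < mu1 + mu2 - lam := by linarith
  refine ⟨min ((mu1+mu2-lam)/16) (1/2), by positivity, ?_⟩
  intro δ hδ hδ0
  have hδ1 : δ ≤ (mu1+mu2-lam)/16 := le_trans hδ0 (min_le_left _ _)
  have hδ2 : δ ≤ 1/2 := le_trans hδ0 (min_le_right _ _)
  set E := Real.exp δ with hEdef
  have hEpos : 0 < E := Real.exp_pos δ
  have hE1 : 1 + δ ≤ E := by
    have := Real.add_one_le_exp δ; rw [hEdef]; linarith
  have hE2 : E ≤ 1 + 2*δ := by
    have h1 : 1 - δ ≤ Real.exp (-δ) := by have := Real.add_one_le_exp (-δ); linarith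
    have h2 : E * Real.exp (-δ) = 1 := by rw [hEdef, ← Real.exp_add]; simp
    nlinarith [Real.exp_pos (-δ)]
  set κ1 : ℝ := δ*(mu1+mu2-lam)/16 with hκ1def
  have hκ1pos : 0 < κ1 := by rw [hκ1def]; positivity
  have key : (1 - lam + lam*E) * ((1-mu1)*E + mu1) * ((1-mu2)*E + mu2)
      ≤ (1 - κ1) * E^2 :=
    key_mgf_ineq lam mu1 mu2 δ E hl0 hl1 hm10 hm11 hm20 hm21 hstab hδ hδ1 hδ2 hE1 hE2
  have hκ1le : κ1 ≤ 1 := by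
    rw [hκ1def]; nlinarith
  refine ⟨9 * Real.exp (2*δ), κ1, by positivity, hκ1pos, ?_⟩
  intro q
  -- bound on each summand for small q
  have hterm : ∀ q : ℕ, q ≤ 1 → ∀ x1 x2 a : Bool,
      bern mu1 x1 * bern mu2 x2 * bern lam a * Real.exp (δ * (nextQ q x1 x2 a : ℝ))
        ≤ Real.exp (2*δ) := by
    intro q hq x1 x2 a
    have hn : (nextQ q x1 x2 a : ℝ) ≤ 2 := by
      have h := nextQ_le_two q hq x1 x2 a
      exact_mod_cast h
    have he : Real.exp (δ * (nextQ q x1 x2 a : ℝ)) ≤ Real.exp (2*δ) := by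
      apply Real.exp_le_exp.mpr
      nlinarith [hn, (by positivity : (0:ℝ) ≤ ((nextQ q x1 x2 a : ℕ):ℝ))]
    have hw : bern mu1 x1 * bern mu2 x2 * bern lam a ≤ 1 :=
      mul_le_one₀ (mul_le_one₀ (bern_le_one hm10 hm11 x1) (bern_nonneg hm20 hm21 x2)
        (bern_le_one hm20 hm21 x2)) (bern_nonneg hl0 hl1 a) (bern_le_one hl0 hl1 a)
    have hw0 : 0 ≤ bern mu1 x1 * bern mu2 x2 * bern lam a :=
      mul_nonneg (mul_nonneg (bern_nonneg hm10 hm11 x1) (bern_nonneg hm20 hm21 x2))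
        (bern_nonneg hl0 hl1 a)
    calc bern mu1 x1 * bern mu2 x2 * bern lam a * Real.exp (δ * (nextQ q x1 x2 a : ℝ))
        ≤ 1 * Real.exp (2*δ) := mul_le_mul hw he (Real.exp_nonneg _) zero_le_one
      _ = Real.exp (2*δ) := one_mul _
  have hsum : ∀ q : ℕ, q ≤ 1 →
      (∑ x1 : Bool, ∑ x2 : Bool, ∑ a : Bool,
          bern mu1 x1 * bern mu2 x2 * bern lam a *
            Real.exp (δ * (nextQ q x1 x2 a : ℝ))) ≤ 8 * Real.exp (2*δ) := by
    intro q hq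
    calc (∑ x1 : Bool, ∑ x2 : Bool, ∑ a : Bool,
            bern mu1 x1 * bern mu2 x2 * bern lam a *
              Real.exp (δ * (nextQ q x1 x2 a : ℝ)))
        ≤ ∑ _x1 : Bool, ∑ _x2 : Bool, ∑ _a : Bool, Real.exp (2*δ) :=
          Finset.sum_le_sum (fun x1 _ => Finset.sum_le_sum (fun x2 _ =>
            Finset.sum_le_sum (fun a _ => hterm q hq x1 x2 a)))
      _ = 8 * Real.exp (2*δ) := by
          simp [Fintype.sum_bool]; ring
  match q with
  | 0 =>
    have hS := hsum 0 (by norm_num)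
    have hx : Real.exp (δ * ((0:ℕ):ℝ)) = 1 := by norm_num
    have he2 : (1:ℝ) ≤ Real.exp (2*δ) := by
      rw [show (1:ℝ) = Real.exp 0 by simp]; exact Real.exp_le_exp.mpr (by linarith)
    rw [if_pos (show (0:ℕ) = 0 ∨ (0:ℕ) = 1 from Or.inl rfl), hx]
    linarith [hS, hκ1le, he2]
  | 1 =>
    have hS := hsum 1 (by norm_num)
    have hx : Real.exp (δ * ((1:ℕ):ℝ)) ≤ Real.exp (2*δ) :=
      Real.exp_le_exp.mpr (by push_cast; linarith)
    have hxpos : 0 < Real.exp (δ * ((1:ℕ):ℝ)) := Real.exp_pos _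
    have hk : κ1 * Real.exp (δ * ((1:ℕ):ℝ)) ≤ 1 * Real.exp (2*δ) :=
      mul_le_mul hκ1le hx hxpos.le zero_le_one
    rw [if_pos (show (1:ℕ) = 0 ∨ (1:ℕ) = 1 from Or.inr rfl)]
    linarith [hS, hk, hxpos]
  | (n+2) =>
    have hind : ((if (n+2 : ℕ) = 0 ∨ (n+2 : ℕ) = 1 then (1:ℝ) else 0)) = 0 := by
      rw [if_neg (by omega)]
    rw [hind]
    have hcast : ∀ x1 x2 a : Bool, ((nextQ (n+2) x1 x2 a : ℕ):ℝ)
        = (n:ℝ) + 2 - b2n x1 - b2n x2 + b2n a := by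
      intro x1 x2 a
      cases x1 <;> cases x2 <;> cases a <;> simp [nextQ, b2n] <;> push_cast <;> ring
    have g0 : Real.exp (δ*((n:ℝ)+2-1-1)) = Real.exp (δ*n) := by
      rw [show δ*((n:ℝ)+2-1-1) = δ*n by ring]
    have g1 : Real.exp (δ*((n:ℝ)+2-1)) = Real.exp (δ*n) * E := by
      rw [show δ*((n:ℝ)+2-1) = δ*n + δ by ring, Real.exp_add]
    have g2 : Real.exp (δ*((n:ℝ)+2)) = Real.exp (δ*n) * E^2 := by
      rw [show δ*((n:ℝ)+2) = δ*n + (δ+δ) by ring, Real.exp_add, Real.exp_add, hEdef]; ring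
    have g3 : Real.exp (δ*((n:ℝ)+2+1)) = Real.exp (δ*n) * E^3 := by
      rw [show δ*((n:ℝ)+2+1) = δ*n + (δ+δ+δ) by ring, Real.exp_add, Real.exp_add,
        Real.exp_add, hEdef]; ring
    simp only [Fintype.sum_bool, hcast, b2n]
    push_cast
    norm_num
    simp only [g0, g1, g2, g3, bern, if_true, if_false]
    norm_num
    nlinarith [mul_le_mul_of_nonneg_left key (Real.exp_nonneg (δ*(n:ℝ)))]
end

section
/- Let λ, μ₁, μ₂ ∈ (0,1) with λ < μ₁ + μ₂. With p₊ = λ(1 − μ₁)(1 − μ₂), p₋₁ = (1 − λ)((1 − μ₁)μ₂ + (1 − μ₂)μ₁) + λμ₁μ₂, p₋₂ = (1 − λ)μ₁μ₂, and α = (−(p₋₁ + p₋₂) + sqrt((p₋₁ + p₋₂)² + 4·p₊·p₋₂)) / (2·p₋₂) ∈ (0,1), define the sequence (π_q)_{q ≥ 0} by: π₀ = (1 + (λ / D)·(1 + α / ((1 − α)(1 − μ₂))))^{−1} where D = (1 − λ)μ₁ + α·p₋₂/(1 − μ₂); π₁ = λ·π₀ / D; π₂ = α·π₁ / (1 − μ₂);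 and π_{q+1} = α·π_q for q ≥ 2. Then π is a probability distribution on ℤ₊ (π_q ≥ 0 and Σ_q π_q = 1) and is a stationary distribution of the chain: Σ_q π_q · P(q, q') = π_{q'} for every q' ∈ ℤ₊. -/
/-- Transition kernel of the single-queue two-server chain: Bernoulli(λ) arrivals,
a priority server of rate μ₁ serving whenever the queue is nonempty, and a second
server of rate μ₂ serving whenever at least two jobs are present. -/
noncomputable def P1 (lam mu1 mu2 : ℝ) (q q' : ℕ) : ℝ :=
  ∑ x1 : Bool, ∑ x2 : Bool, ∑ a : Bool,
    bern mu1 x1 * bern mu2 x2 * bern lam a * (if q' = nextQ q x1 x2 a then 1 else 0)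

/-!
From a state `q ≥ 2` the chain moves by `+1, -1, -2` with probabilities `p₊, p₋₁, p₋₂`, and it
never moves up by more than one or down by more than two, so each balance equation
`Σ_q π_q P(q, q') = π_{q'}` has at most four terms. For a geometric tail `π_q ∝ α^q` the balance
equation at `q' ≥ 3` reads `(α - 1)(p₋₂ α² + (p₋₁ + p₋₂) α - p₊) = 0`, and `α` is the positive root
of the quadratic factor. Since `p₋₁ + 2 p₋₂ - p₊ = μ₁ + μ₂ - λ`, stability makes the quadratic exceed
`p₊` at `1`, so `α < 1`. The boundary equations at `0, 1, 2` hold by the choice of `π₁` (flow across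
the cut between `0` and `1` balances) and of `π₂ = α π₁ / (1 - μ₂)`.
-/

noncomputable def quadPosRoot (c b d : ℝ) : ℝ := (-b + √(b ^ 2 + 4 * d * c)) / (2 * c)

section QuadPosRoot

variable {c b d : ℝ}

theorem quadPosRoot_spec (hc : c ≠ 0) (hdisc : 0 ≤ b ^ 2 + 4 * d * c) :
    c * quadPosRoot c b d ^ 2 + b * quadPosRoot c b d = d := by
  have hs : discrim c b (-d) = √(b ^ 2 + 4 * d * c) * √(b ^ 2 + 4 * d * c) := by
    rw [Real.mul_self_sqrt hdisc, discrim]; ring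
  have h := (quadratic_eq_zero_iff hc hs (quadPosRoot c b d)).mpr (Or.inl rfl)
  linear_combination h

theorem quadPosRoot_pos (hc : 0 < c) (hd : 0 < d) : 0 < quadPosRoot c b d := by
  have : b < √(b ^ 2 + 4 * d * c) := Real.lt_sqrt_of_sq_lt (by nlinarith [mul_pos hd hc])
  exact div_pos (by linarith) (by linarith)

theorem quadPosRoot_lt_one (hc : 0 < c) (hd : 0 < d) (hdbc : d < b + c) :
    quadPosRoot c b d < 1 := by
  have hroot : c * quadPosRoot c b d ^ 2 + b * quadPosRoot c b d = d :=
    quadPosRoot_spec hc.ne' (by nlinarith [sq_nonneg b, mul_pos hd hc])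
  by_contra! h
  -- `c x ^ 2 + b x - d = (x - 1) (c (x + 1) + b) + (b + c - d)` is positive for `x ≥ 1`
  nlinarith [mul_nonneg (sub_nonneg.2 h) (by nlinarith [mul_nonneg hc.le (sub_nonneg.2 h)] :
    0 ≤ c * (quadPosRoot c b d + 1) + b)]

end QuadPosRoot

theorem hasSum_ite_geometric {x y z a : ℝ} (ha0 : 0 ≤ a) (ha1 : a < 1) :
    HasSum (fun q : ℕ => if q = 0 then x else if q = 1 then y else z * a ^ (q - 2))
      (x + y + z * (1 - a)⁻¹) := by
  refine (hasSum_nat_add_iff' 2).mp ?_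
  have hhead : ∑ q ∈ Finset.range 2,
      (if q = 0 then x else if q = 1 then y else z * a ^ (q - 2)) = x + y := by
    simp [Finset.sum_range_succ]
  rw [hhead, add_sub_cancel_left]
  simpa using (hasSum_geometric_of_lt_one ha0 ha1).mul_left z

noncomputable def pUp (lam mu1 mu2 : ℝ) : ℝ := lam * (1 - mu1) * (1 - mu2)

noncomputable def pDown1 (lam mu1 mu2 : ℝ) : ℝ :=
  (1 - lam) * ((1 - mu1) * mu2 + (1 - mu2) * mu1) + lam * mu1 * mu2

noncomputable def pDown2 (lam mu1 mu2 : ℝ) : ℝ := (1 - lam) * mu1 * mu2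

theorem pDown1_add_two_mul_pDown2_sub_pUp (lam mu1 mu2 : ℝ) :
    pDown1 lam mu1 mu2 + 2 * pDown2 lam mu1 mu2 - pUp lam mu1 mu2 = mu1 + mu2 - lam := by
  unfold pDown1 pDown2 pUp; ring

section Kernel

variable {lam mu1 mu2 : ℝ}

theorem nextQ_le_add_one (q : ℕ) (x1 x2 a : Bool) : nextQ q x1 x2 a ≤ q + 1 := by
  cases x1 <;> cases x2 <;> cases a <;> simp only [nextQ, b2n] <;> split_ifs <;> omega

theorem le_nextQ_add_two (q : ℕ) (x1 x2 a : Bool) : q ≤ nextQ q x1 x2 a + 2 := by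
  cases x1 <;> cases x2 <;> cases a <;> simp only [nextQ, b2n] <;> split_ifs <;> omega

theorem P1_eq_zero_of_lt_or_lt {q q' : ℕ} (h : q + 1 < q' ∨ q' + 2 < q) :
    P1 lam mu1 mu2 q q' = 0 := by
  refine Fintype.sum_eq_zero _ fun x1 => Fintype.sum_eq_zero _ fun x2 =>
    Fintype.sum_eq_zero _ fun a => ?_
  have := nextQ_le_add_one q x1 x2 a
  have := le_nextQ_add_two q x1 x2 a
  rw [if_neg (by omega), mul_zero]

theorem P1_zero_zero : P1 lam mu1 mu2 0 0 = 1 - lam := by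
  simp [P1, bern, nextQ, b2n]; ring

theorem P1_zero_one : P1 lam mu1 mu2 0 1 = lam := by
  simp [P1, bern, nextQ, b2n]; ring

theorem P1_one_zero : P1 lam mu1 mu2 1 0 = (1 - lam) * mu1 := by
  simp [P1, bern, nextQ, b2n]; ring

theorem P1_one_one : P1 lam mu1 mu2 1 1 = lam * mu1 + (1 - lam) * (1 - mu1) := by
  simp [P1, bern, nextQ, b2n]; ring

theorem P1_one_two : P1 lam mu1 mu2 1 2 = lam * (1 - mu1) := by
  simp [P1, bern, nextQ, b2n]; ring

theorem P1_add_two_add_two (m : ℕ) :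
    P1 lam mu1 mu2 (m + 2) (m + 2) =
      1 - pUp lam mu1 mu2 - pDown1 lam mu1 mu2 - pDown2 lam mu1 mu2 := by
  simp [P1, bern, nextQ, b2n, pUp, pDown1, pDown2]; ring

theorem P1_add_two_add_three (m : ℕ) : P1 lam mu1 mu2 (m + 2) (m + 3) = pUp lam mu1 mu2 := by
  simp [P1, bern, nextQ, b2n, pUp]; ring

theorem P1_add_two_add_one (m : ℕ) : P1 lam mu1 mu2 (m + 2) (m + 1) = pDown1 lam mu1 mu2 := by
  simp [P1, bern, nextQ, b2n, pDown1]; ring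

theorem P1_add_two_self (m : ℕ) : P1 lam mu1 mu2 (m + 2) m = pDown2 lam mu1 mu2 := by
  simp [P1, bern, nextQ, b2n, pDown2, add_assoc]; ring

theorem hasSum_mul_P1_zero (π : ℕ → ℝ) :
    HasSum (fun q => π q * P1 lam mu1 mu2 q 0)
      (π 0 * P1 lam mu1 mu2 0 0 + π 1 * P1 lam mu1 mu2 1 0 + π 2 * P1 lam mu1 mu2 2 0) := by
  have h : HasSum (fun q => π q * P1 lam mu1 mu2 q 0)
      (∑ q ∈ Finset.range 3, π q * P1 lam mu1 mu2 q 0) :=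
    hasSum_sum_of_ne_finset_zero fun q hq => by
      rw [P1_eq_zero_of_lt_or_lt (by rw [Finset.mem_range] at hq; omega), mul_zero]
  simpa [Finset.sum_range_succ] using h

theorem hasSum_mul_P1_succ (π : ℕ → ℝ) (m : ℕ) :
    HasSum (fun q => π q * P1 lam mu1 mu2 q (m + 1))
      (π m * P1 lam mu1 mu2 m (m + 1) + π (m + 1) * P1 lam mu1 mu2 (m + 1) (m + 1) +
        π (m + 2) * P1 lam mu1 mu2 (m + 2) (m + 1) +
        π (m + 3) * P1 lam mu1 mu2 (m + 3) (m + 1)) := by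
  have h : HasSum (fun q => π q * P1 lam mu1 mu2 q (m + 1))
      (∑ q ∈ Finset.Ico m (m + 4), π q * P1 lam mu1 mu2 q (m + 1)) :=
    hasSum_sum_of_ne_finset_zero fun q hq => by
      rw [P1_eq_zero_of_lt_or_lt (by rw [Finset.mem_Ico] at hq; omega), mul_zero]
  rwa [Finset.sum_Ico_eq_sum_range, add_tsub_cancel_left, Finset.sum_range_succ,
    Finset.sum_range_succ, Finset.sum_range_succ, Finset.sum_range_one, add_zero] at h

end Kernel

theorem hasSum_mul_P1_of_recurrence {lam mu1 mu2 a : ℝ} {π : ℕ → ℝ} (hmu2 : mu2 ≠ 1)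
    (hroot : pDown2 lam mu1 mu2 * a ^ 2 + (pDown1 lam mu1 mu2 + pDown2 lam mu1 mu2) * a =
      pUp lam mu1 mu2)
    (hcut : lam * π 0 = (1 - lam) * mu1 * π 1 + pDown2 lam mu1 mu2 * π 2)
    (htwo : (1 - mu2) * π 2 = a * π 1) (hgeom : ∀ q, 2 ≤ q → π (q + 1) = a * π q) (q' : ℕ) :
    HasSum (fun q => π q * P1 lam mu1 mu2 q q') (π q') := by
  have hpUp : pUp lam mu1 mu2 = lam * (1 - mu1) * (1 - mu2) := rfl
  have hmu2' : 1 - mu2 ≠ 0 := sub_ne_zero.mpr (Ne.symm hmu2)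
  set pp := pUp lam mu1 mu2
  set pm1 := pDown1 lam mu1 mu2
  set pm2 := pDown2 lam mu1 mu2
  rcases q' with _ | _ | _ | n
  · convert hasSum_mul_P1_zero π using 1
    rw [P1_zero_zero, P1_one_zero, P1_add_two_self 0]
    linear_combination hcut
  · convert hasSum_mul_P1_succ π 0 using 1
    rw [P1_zero_one, P1_one_one, P1_add_two_add_one 0, P1_add_two_self 1]
    have h3 : π 3 = a * π 2 := hgeom 2 le_rfl
    refine (mul_left_cancel₀ hmu2' ?_).symm
    linear_combination (1 - mu2) * hcut + (1 - mu2) * pm2 * h3 + (pm1 + pm2 + a * pm2) * htwo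
      + π 1 * hroot + π 1 * hpUp
  · convert hasSum_mul_P1_succ π 1 using 1
    rw [P1_one_two, P1_add_two_add_two 0, P1_add_two_add_one 1, P1_add_two_self 2]
    have h3 : π 3 = a * π 2 := hgeom 2 le_rfl
    have h4 : π 4 = a * π 3 := hgeom 3 (by norm_num)
    refine (mul_left_cancel₀ hmu2' ?_).symm
    linear_combination (1 - mu2) * (pm1 + a * pm2) * h3 + (1 - mu2) * pm2 * h4
      + (a * pm1 + a ^ 2 * pm2 - pp - pm1 - pm2) * htwo + π 1 * (a - 1) * hroot - π 1 * hpUp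
  · convert hasSum_mul_P1_succ π (n + 2) using 1
    rw [P1_add_two_add_three n, P1_add_two_add_two (n + 1), P1_add_two_add_one (n + 2),
      P1_add_two_self (n + 3)]
    have h3 : π (n + 3) = a * π (n + 2) := hgeom _ (by omega)
    have h4 : π (n + 4) = a * π (n + 3) := hgeom _ (by omega)
    have h5 : π (n + 5) = a * π (n + 4) := hgeom _ (by omega)
    symm
    linear_combination pm2 * h5 + (pm1 + a * pm2) * h4
      + (a * pm1 + a ^ 2 * pm2 - pp - pm1 - pm2) * h3 + π (n + 2) * (a - 1) * hroot

theorem hasSum_mul_P1_ite_geometric {lam mu1 mu2 a D x : ℝ} (hmu2 : mu2 ≠ 1) (hD0 : D ≠ 0)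
    (hD : D = (1 - lam) * mu1 + a * pDown2 lam mu1 mu2 / (1 - mu2))
    (hroot : pDown2 lam mu1 mu2 * a ^ 2 + (pDown1 lam mu1 mu2 + pDown2 lam mu1 mu2) * a =
      pUp lam mu1 mu2) (q' : ℕ) :
    HasSum (fun q => (if q = 0 then x else if q = 1 then lam * x / D
        else a / (1 - mu2) * (lam * x / D) * a ^ (q - 2)) * P1 lam mu1 mu2 q q')
      (if q' = 0 then x else if q' = 1 then lam * x / D
        else a / (1 - mu2) * (lam * x / D) * a ^ (q' - 2)) := by
  refine hasSum_mul_P1_of_recurrence hmu2 hroot ?_ ?_ (fun q hq => ?_) q'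
  · show lam * x = (1 - lam) * mu1 * (lam * x / D) +
      pDown2 lam mu1 mu2 * (a / (1 - mu2) * (lam * x / D) * a ^ 0)
    calc lam * x = D * (lam * x / D) := (mul_div_cancel₀ _ hD0).symm
      _ = _ := by rw [hD]; ring
  · show (1 - mu2) * (a / (1 - mu2) * (lam * x / D) * a ^ 0) = a * (lam * x / D)
    field_simp
  · obtain ⟨k, rfl⟩ := Nat.exists_eq_add_of_le' hq
    show a / (1 - mu2) * (lam * x / D) * a ^ (k + 1) = a * (a / (1 - mu2) * (lam * x / D) * a ^ k)
    ring

/-- For `λ, μ₁, μ₂ ∈ (0,1)` with `λ < μ₁ + μ₂`, the explicitly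
defined sequence `π` (with `π₀ = (1 + (λ/D)(1 + α/((1−α)(1−μ₂))))⁻¹`,
`D = (1−λ)μ₁ + α p₋₂/(1−μ₂)`, `π₁ = λπ₀/D`, `π₂ = απ₁/(1−μ₂)` and
`π_{q+1} = α π_q` for `q ≥ 2`) is a probability distribution on `ℤ₊` and is
stationary for the chain: `Σ_q π_q P(q,q') = π_{q'}` for every `q'`. -/
theorem stationary_distribution_single_queue_two_servers
    (lam mu1 mu2 : ℝ)
    (hlam : lam ∈ Set.Ioo (0:ℝ) 1) (hmu1 : mu1 ∈ Set.Ioo (0:ℝ) 1)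
    (hmu2 : mu2 ∈ Set.Ioo (0:ℝ) 1) (hstab : lam < mu1 + mu2) :
    let pp : ℝ := lam * (1 - mu1) * (1 - mu2)
    let pm1 : ℝ := (1 - lam) * ((1 - mu1) * mu2 + (1 - mu2) * mu1) + lam * mu1 * mu2
    let pm2 : ℝ := (1 - lam) * mu1 * mu2
    let a : ℝ := (-(pm1 + pm2) + Real.sqrt ((pm1 + pm2) ^ 2 + 4 * pp * pm2)) / (2 * pm2)
    let D : ℝ := (1 - lam) * mu1 + a * pm2 / (1 - mu2)
    let pi0 : ℝ := (1 + (lam / D) * (1 + a / ((1 - a) * (1 - mu2))))⁻¹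
    let piDist : ℕ → ℝ := fun q =>
      if q = 0 then pi0
      else if q = 1 then lam * pi0 / D
      else (a / (1 - mu2)) * (lam * pi0 / D) * a ^ (q - 2)
    (0 < a ∧ a < 1) ∧
    (∀ q, 0 ≤ piDist q) ∧
    HasSum piDist 1 ∧
    ∀ q' : ℕ, HasSum (fun q => piDist q * P1 lam mu1 mu2 q q') (piDist q') := by
  intro pp pm1 pm2 a D pi0 piDist
  obtain ⟨hlam0, hlam1⟩ := hlam
  obtain ⟨hmu10, hmu11⟩ := hmu1
  obtain ⟨hmu20, hmu21⟩ := hmu2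
  have hpp : 0 < pp := mul_pos (mul_pos hlam0 (sub_pos.2 hmu11)) (sub_pos.2 hmu21)
  have hpm2 : 0 < pm2 := mul_pos (mul_pos (sub_pos.2 hlam1) hmu10) hmu20
  have hdrift : pp < (pm1 + pm2) + pm2 := by
    linarith [pDown1_add_two_mul_pDown2_sub_pUp lam mu1 mu2]
  have hroot : pm2 * a ^ 2 + (pm1 + pm2) * a = pp :=
    quadPosRoot_spec hpm2.ne' (by nlinarith [mul_pos hpp hpm2])
  have ha0 : 0 < a := quadPosRoot_pos hpm2 hpp
  have ha1 : a < 1 := quadPosRoot_lt_one hpm2 hpp hdrift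
  have hmu2' : 0 < 1 - mu2 := sub_pos.2 hmu21
  have ha1' : 0 < 1 - a := sub_pos.2 ha1
  have hD : 0 < D := by
    have : 0 < 1 - lam := sub_pos.2 hlam1
    positivity
  have hS : 0 < 1 + (lam / D) * (1 + a / ((1 - a) * (1 - mu2))) := by positivity
  refine ⟨⟨ha0, ha1⟩, fun q => ?_, ?_, hasSum_mul_P1_ite_geometric hmu21.ne hD.ne' rfl hroot⟩
  · have hpi0 : 0 < pi0 := inv_pos.2 hS
    simp only [piDist]
    split_ifs <;> positivity
  · convert hasSum_ite_geometric ha0.le ha1 using 1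
    have h1 : pi0 * (1 + (lam / D) * (1 + a / ((1 - a) * (1 - mu2)))) = 1 := inv_mul_cancel₀ hS.ne'
    simp only [div_eq_mul_inv, mul_inv] at h1 ⊢
    linear_combination -h1
end
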